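/- arXiv:1607.04961 — 6 statements merged into one kernel-verified Lean document; each statement's English description precedes it below -/
import Mathlib

section
/- Let f : ℂ → ℂ be nonvanishing and sufficiently differentiable on an open set, and set y = -(3/2) f'/f. Then y satisfies the generalised Chazy equation with k=3 (i.e. y''' - 2y''y + 3(y')² - (4/27)(6y'-y²)² = 0) if and only if 2f''''f - 2f'''f' + (f'')² = 0 on that set. -/
/-!
Since `f' = -(2/3) y f`, the Leibniz rule expresses `f''`, `f'''` and `f''''` through `y`, `y'`,
`y''`, `y'''` and `f`, and a direct computation gives
`2 f'''' f - 2 f''' f' + (f'')² = -(4/3) f² (y''' - 2 y'' y + 3 y'² - (4/27) (6 y' - y²)²)`.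
As `f` does not vanish, one side is zero exactly when the other is.
-/

open Set Finset

variable {𝕜 : Type*} [NontriviallyNormedField 𝕜] {U : Set 𝕜} {f g y : 𝕜 → 𝕜} {x : 𝕜}

theorem iteratedDeriv_succ_eq_sum_of_eqOn_deriv_eq_mul (hU : IsOpen U)
    (hfg : EqOn (deriv f) (fun t => g t * f t) U) {n : ℕ} (hg : ContDiffOn 𝕜 n g U)
    (hf : ContDiffOn 𝕜 n f U) (hx : x ∈ U) :
    iteratedDeriv (n + 1) f x = ∑ i ∈ range (n + 1),
      n.choose i * iteratedDeriv i g x * iteratedDeriv (n - i) f x := by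
  rw [iteratedDeriv_succ', hfg.iteratedDeriv_of_isOpen hU n hx,
    iteratedDeriv_fun_mul (hg.contDiffAt (hU.mem_nhds hx)) (hf.contDiffAt (hU.mem_nhds hx))]

theorem linearised_chazy_k3_eq_mul_chazy_k3 [CharZero 𝕜] (hU : IsOpen U)
    (hfy : EqOn (deriv f) (fun t => -(2 / 3) * y t * f t) U)
    (hy : ContDiffOn 𝕜 3 y U) (hf : ContDiffOn 𝕜 3 f U) (hx : x ∈ U) :
    2 * iteratedDeriv 4 f x * f x - 2 * iteratedDeriv 3 f x * deriv f x
        + iteratedDeriv 2 f x ^ 2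
      = -(4 / 3) * f x ^ 2 * (iteratedDeriv 3 y x - 2 * iteratedDeriv 2 y x * y x
          + 3 * deriv y x ^ 2 - 4 / 27 * (6 * deriv y x - y x ^ 2) ^ 2) := by
  have hg : ContDiffOn 𝕜 3 (fun t => -(2 / 3) * y t) U := contDiffOn_const.mul hy
  have leibniz (n : ℕ) (hn : n ≤ 3) := iteratedDeriv_succ_eq_sum_of_eqOn_deriv_eq_mul hU hfy
    (hg.of_le (by exact_mod_cast hn)) (hf.of_le (by exact_mod_cast hn)) hx
  have hf1 := leibniz 0 (by norm_num)
  have hf2 := leibniz 1 (by norm_num)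
  have hf3 := leibniz 2 (by norm_num)
  have hf4 := leibniz 3 (by norm_num)
  simp only [sum_range_succ, sum_range_zero, iteratedDeriv_const_mul_field] at hf1 hf2 hf3 hf4
  norm_num [Nat.choose, iteratedDeriv_one, iteratedDeriv_zero] at hf1 hf2 hf3 hf4 ⊢
  rw [hf4, hf3, hf2, hf1]
  ring

/-- For nonvanishing `f`, `y = -(3/2) f'/f` solves the generalised Chazy equation with `k = 3`
on an open set iff `2f''''f - 2f'''f' + (f'')² = 0` there. -/
theorem chazy_k3_linearisation (U : Set ℂ) (hU : IsOpen U) (f : ℂ → ℂ)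
    (hf : ContDiffOn ℂ 4 f U) (hf0 : ∀ x ∈ U, f x ≠ 0)
    (y : ℂ → ℂ) (hy : ∀ x : ℂ, y x = -(3 / 2) * deriv f x / f x) :
    (∀ x ∈ U, iteratedDeriv 3 y x - 2 * iteratedDeriv 2 y x * y x + 3 * (deriv y x) ^ 2
        - (4 / 27) * (6 * deriv y x - (y x) ^ 2) ^ 2 = 0)
      ↔ (∀ x ∈ U, 2 * iteratedDeriv 4 f x * f x - 2 * iteratedDeriv 3 f x * deriv f x
          + (iteratedDeriv 2 f x) ^ 2 = 0) := by
  have hfy : EqOn (deriv f) (fun t => -(2 / 3) * y t * f t) U := fun x hx => by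
    simp only [hy]
    field_simp [hf0 x hx]
  have hyU : ContDiffOn ℂ 3 y U := by
    rw [funext hy]
    exact (contDiffOn_const.mul (hf.deriv_of_isOpen hU (by norm_num))).div
      (hf.of_le (by norm_num)) hf0
  refine forall₂_congr fun x hx => ?_
  rw [linearised_chazy_k3_eq_mul_chazy_k3 hU hfy hyU (hf.of_le (by norm_num)) hx]
  simp [hf0 x hx]
end

section
/- If f : ℂ → ℂ is five times differentiable and satisfies 2f''''f - 2f'''f' + (f'')² = 0 on an open connected set with f nonvanishing, then f''''' = 0, hence f is a polynomial of degree at most 4; moreover a quartic f(t) = at⁴ + bt³ + ct² + dt + e satisfies 2f''''f - 2f'''f' + (f'')² = 0 identically if and only if 12ae - 3bd + c² = 0. -/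
/-!
Differentiating `2 f'''' f - 2 f''' f' + (f'')²` gives `2 f''''' f`, all other terms cancelling.
So if the expression vanishes on an open set where `f ≠ 0`, then `f''''' = 0` there; the Taylor
series of the analytic function `f` then terminates, and the identity theorem propagates the
resulting quartic over the connected set. Conversely, on a quartic the expression is the constant
`4 (12ae - 3bd + c²)`.
-/

open Polynomial Set Filter Topology
open scoped Nat

theorem iteratedDeriv_eq_zero_of_le {𝕜 F : Type*} [NontriviallyNormedField 𝕜]
    [NormedAddCommGroup F] [NormedSpace 𝕜 F] {f : 𝕜 → F} {x : 𝕜} {n k : ℕ}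
    (h : iteratedDeriv n f =ᶠ[𝓝 x] 0) (hk : n ≤ k) : iteratedDeriv k f x = 0 := by
  obtain ⟨m, rfl⟩ := Nat.exists_eq_add_of_le' hk
  rw [iteratedDeriv_eq_iterate, Function.iterate_add_apply, ← iteratedDeriv_eq_iterate,
    ← iteratedDeriv_eq_iterate, h.iteratedDeriv_eq m]
  simp [Pi.zero_def]

theorem Polynomial.natDegree_sum_C_mul_X_sub_C_pow_le {R : Type*} [CommRing R] (c : ℕ → R)
    (x₀ : R) (n : ℕ) :
    (∑ k ∈ Finset.range (n + 1), C (c k) * (X - C x₀) ^ k).natDegree ≤ n := by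
  refine natDegree_sum_le_of_forall_le _ _ fun k hk => ?_
  calc (C (c k) * (X - C x₀) ^ k).natDegree
      ≤ k * (X - C x₀).natDegree := (natDegree_C_mul_le _ _).trans natDegree_pow_le
    _ ≤ k * 1 := Nat.mul_le_mul_left k (natDegree_X_sub_C_le x₀)
    _ ≤ n := by simpa using Finset.mem_range.1 hk

theorem exists_polynomial_eqOn_of_iteratedDeriv_eq_zero {U : Set ℂ} (hU : IsOpen U)
    (hpre : IsPreconnected U) {f : ℂ → ℂ} (hf : AnalyticOnNhd ℂ f U) {n : ℕ}
    (hn : ∀ x ∈ U, iteratedDeriv (n + 1) f x = 0) :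
    ∃ p : ℂ[X], p.natDegree ≤ n ∧ EqOn f (fun x => p.eval x) U := by
  rcases U.eq_empty_or_nonempty with rfl | ⟨x₀, hx₀⟩
  · exact ⟨0, by simp, eqOn_empty _ _⟩
  set c : ℕ → ℂ := fun k => (k ! : ℂ)⁻¹ * iteratedDeriv k f x₀
  refine ⟨∑ k ∈ Finset.range (n + 1), C (c k) * (X - C x₀) ^ k,
    natDegree_sum_C_mul_X_sub_C_pow_le c x₀ n, ?_⟩
  refine hf.eqOn_of_preconnected_of_eventuallyEq
    ((AnalyticOnNhd.eval_polynomial _).mono (subset_univ U)) hpre hx₀ ?_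
  obtain ⟨r, hr, hball⟩ := Metric.isOpen_iff.1 hU x₀ hx₀
  have hvanish : iteratedDeriv (n + 1) f =ᶠ[𝓝 x₀] 0 :=
    eventually_of_mem (hU.mem_nhds hx₀) hn
  filter_upwards [Metric.ball_mem_nhds x₀ hr] with z hz
  have hsum := Complex.hasSum_taylorSeries_on_ball (hf.differentiableOn.mono hball) hz
  have hfinite := hasSum_sum_of_ne_finset_zero (L := .unconditional ℕ)
    (s := Finset.range (n + 1)) (f := fun k => (k ! : ℂ)⁻¹ • (z - x₀) ^ k • iteratedDeriv k f x₀)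
    fun k hk => by
      rw [iteratedDeriv_eq_zero_of_le hvanish (by simpa using hk), smul_zero, smul_zero]
  refine (hsum.unique hfinite).trans ?_
  simp only [eval_finsetSum, eval_mul, eval_C, eval_pow, eval_sub, eval_X, c, smul_eq_mul]
  exact Finset.sum_congr rfl fun k _ => by ring

theorem Polynomial.eval_eq_of_natDegree_le_four {R : Type*} [CommSemiring R] {p : R[X]}
    (hp : p.natDegree ≤ 4) (x : R) :
    p.eval x = p.coeff 4 * x ^ 4 + p.coeff 3 * x ^ 3 + p.coeff 2 * x ^ 2 + p.coeff 1 * x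
      + p.coeff 0 := by
  rw [eval_eq_sum_range' (Nat.lt_succ_of_le hp)]
  simp only [Finset.sum_range_succ, Finset.sum_range_zero]
  ring

theorem Polynomial.iteratedDeriv_eval {𝕜 : Type*} [NontriviallyNormedField 𝕜] (p : 𝕜[X])
    (k : ℕ) : iteratedDeriv k (fun x => p.eval x) = fun x => (derivative^[k] p).eval x := by
  induction k with
  | zero => rfl
  | succ k ih =>
    funext x
    rw [iteratedDeriv_succ, ih, Function.iterate_succ_apply', Polynomial.deriv]

noncomputable def chazyK3Operator (f : ℂ → ℂ) (x : ℂ) : ℂ :=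
  2 * iteratedDeriv 4 f x * f x - 2 * iteratedDeriv 3 f x * deriv f x + (iteratedDeriv 2 f x) ^ 2

theorem hasDerivAt_chazyK3Operator {f : ℂ → ℂ} {x : ℂ} (hf : AnalyticAt ℂ f x) :
    HasDerivAt (chazyK3Operator f) (2 * iteratedDeriv 5 f x * f x) x := by
  have hD (k : ℕ) : HasDerivAt (iteratedDeriv k f) (iteratedDeriv (k + 1) f x) x := by
    rw [iteratedDeriv_succ]
    have hk : AnalyticAt ℂ (iteratedDeriv k f) x := by
      rw [iteratedDeriv_eq_iterate]
      exact hf.iterated_deriv k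
    exact hk.differentiableAt.hasDerivAt
  have h0 : HasDerivAt f (deriv f x) x := hf.differentiableAt.hasDerivAt
  have h1 : HasDerivAt (deriv f) (iteratedDeriv 2 f x) x := by
    simpa only [iteratedDeriv_one] using hD 1
  refine (((hD 4).const_mul 2).mul h0).sub (((hD 3).const_mul 2).mul h1) |>.add ((hD 2).pow 2)
    |>.congr_deriv ?_
  norm_num
  ring

theorem iteratedDeriv_five_eq_zero_of_chazyK3Operator_eq_zero {U : Set ℂ} (hU : IsOpen U)
    {f : ℂ → ℂ} (hf : AnalyticOnNhd ℂ f U) (hf0 : ∀ x ∈ U, f x ≠ 0)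
    (hchazy : ∀ x ∈ U, chazyK3Operator f x = 0) {x : ℂ} (hx : x ∈ U) :
    iteratedDeriv 5 f x = 0 := by
  have hconst : HasDerivAt (chazyK3Operator f) 0 x :=
    (hasDerivAt_const x 0).congr_of_eventuallyEq (eventually_of_mem (hU.mem_nhds hx) hchazy)
  have h := (hasDerivAt_chazyK3Operator (hf x hx)).unique hconst
  simpa [hf0 x hx] using h

theorem chazyK3Operator_quartic (a b c d e t : ℂ) :
    chazyK3Operator (fun t => a * t ^ 4 + b * t ^ 3 + c * t ^ 2 + d * t + e) t
      = 4 * (12 * a * e - 3 * b * d + c ^ 2) := by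
  have hp : (fun t => a * t ^ 4 + b * t ^ 3 + c * t ^ 2 + d * t + e)
      = fun t => (C a * X ^ 4 + C b * X ^ 3 + C c * X ^ 2 + C d * X + C e).eval t := by
    funext t
    simp
  rw [hp, chazyK3Operator, ← iteratedDeriv_one]
  simp only [Polynomial.iteratedDeriv_eval]
  simp [Function.iterate_succ_apply']
  ring

/-- If `f` is five times differentiable, nonvanishing, and satisfies
`2f''''f - 2f'''f' + (f'')² = 0` on an open connected set, then `f''''' = 0` there, hence
`f` is a polynomial of degree at most 4; moreover a quartic `at⁴+bt³+ct²+dt+e` satisfies the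
equation identically iff `12ae - 3bd + c² = 0`. -/
theorem chazy_k3_quartic (U : Set ℂ) (hU : IsOpen U) (hconn : IsConnected U) (f : ℂ → ℂ)
    (hf : ContDiffOn ℂ 5 f U) (hf0 : ∀ x ∈ U, f x ≠ 0)
    (heq : ∀ x ∈ U, 2 * iteratedDeriv 4 f x * f x - 2 * iteratedDeriv 3 f x * deriv f x
        + (iteratedDeriv 2 f x) ^ 2 = 0) :
    (∀ x ∈ U, iteratedDeriv 5 f x = 0) ∧
    (∃ a b c d e : ℂ, ∀ x ∈ U, f x = a * x ^ 4 + b * x ^ 3 + c * x ^ 2 + d * x + e) ∧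
    (∀ a b c d e : ℂ, ∀ g : ℂ → ℂ,
      (∀ t : ℂ, g t = a * t ^ 4 + b * t ^ 3 + c * t ^ 2 + d * t + e) →
      ((∀ t : ℂ, 2 * iteratedDeriv 4 g t * g t - 2 * iteratedDeriv 3 g t * deriv g t
          + (iteratedDeriv 2 g t) ^ 2 = 0) ↔ 12 * a * e - 3 * b * d + c ^ 2 = 0)) := by
  have hana : AnalyticOnNhd ℂ f U := (hf.differentiableOn (by norm_num)).analyticOnNhd hU
  have h5 : ∀ x ∈ U, iteratedDeriv 5 f x = 0 :=
    fun x => iteratedDeriv_five_eq_zero_of_chazyK3Operator_eq_zero hU hana hf0 heq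
  obtain ⟨p, hp, hfp⟩ :=
    exists_polynomial_eqOn_of_iteratedDeriv_eq_zero hU hconn.isPreconnected hana h5
  refine ⟨h5, ⟨p.coeff 4, p.coeff 3, p.coeff 2, p.coeff 1, p.coeff 0,
    fun x hx => (hfp hx).trans (eval_eq_of_natDegree_le_four hp x)⟩, ?_⟩
  intro a b c d e g hg
  obtain rfl : g = _ := funext hg
  change (∀ t, chazyK3Operator _ t = 0) ↔ _
  simp [chazyK3Operator_quartic]
end

section
/- Suppose y : ℂ → ℂ solves the generalised Chazy equation y''' - 2y''y + 3(y')² - (4/(36-k²))(6y'-y²)² = 0 with k ≠ ±6 on an open set, and let a,b,c,d ∈ ℂ with ad - bc = 1 and cx + d ≠ 0. Then ỹ(x) = (cx+d)⁻² · y((ax+b)/(cx+d)) - 6c/(cx+d) also solves the same generalised Chazy equation. -/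
/-!
Write `I = (cx+d)⁻¹` and `g x = (ax+b)/(cx+d)`. Since `ad - bc = 1`, `g' = I²` and `I' = -c I²`,
so differentiation sends the weight-`n` slash `f(g x) Iⁿ` to `f'(g x) Iⁿ⁺² - n c f(g x) Iⁿ⁺¹`.
Hence the first three derivatives of `ỹ = y(g) I² - 6c I` are explicit polynomials in
`c`, `I` and the jet of `y` at `g x`. In these terms the shift `-6c I` is exactly what makes
`y''' - 2yy'' + 3y'²` and `6y' - y²` covariant of weights 8 and 4, so the whole Chazy expression
of `ỹ` at `x` is `I⁸` times that of `y` at `g x`, whatever the coupling constant.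
-/

open Set

section IteratedDeriv

variable {𝕜 F : Type*} [NontriviallyNormedField 𝕜] [NormedAddCommGroup F] [NormedSpace 𝕜 F]

theorem AnalyticOnNhd.hasDerivAt_iteratedDeriv [CompleteSpace F] {f : 𝕜 → F} {s : Set 𝕜} {x : 𝕜}
    (h : AnalyticOnNhd 𝕜 f s) (hx : x ∈ s) (n : ℕ) :
    HasDerivAt (iteratedDeriv n f) (iteratedDeriv (n + 1) f x) x := by
  rw [iteratedDeriv_succ, iteratedDeriv_eq_iterate]
  exact (h.iterated_deriv n x hx).differentiableAt.hasDerivAt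

theorem Set.EqOn.iteratedDeriv_succ {f g g' : 𝕜 → F} {s : Set 𝕜} {n : ℕ} (hs : IsOpen s)
    (hf : EqOn (iteratedDeriv n f) g s) (hg : ∀ x ∈ s, HasDerivAt g (g' x) x) :
    EqOn (iteratedDeriv (n + 1) f) g' s := fun x hx => by
  rw [_root_.iteratedDeriv_succ, hf.deriv hs hx, (hg x hx).deriv]

end IteratedDeriv

noncomputable section

def chazyPoly (μ y₀ y₁ y₂ y₃ : ℂ) : ℂ :=
  y₃ - 2 * y₂ * y₀ + 3 * y₁ ^ 2 - μ * (6 * y₁ - y₀ ^ 2) ^ 2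

/-- In the paper's normalisation the coupling is `μ = 4 / (36 - k²)`. -/
def chazyOp (μ : ℂ) (f : ℂ → ℂ) (x : ℂ) : ℂ :=
  chazyPoly μ (f x) (deriv f x) (iteratedDeriv 2 f x) (iteratedDeriv 3 f x)

theorem chazyPoly_transform (μ c I y₀ y₁ y₂ y₃ : ℂ) :
    chazyPoly μ (y₀ * I ^ 2 - 6 * c * I)
      (y₁ * I ^ 4 - 2 * c * y₀ * I ^ 3 + 6 * c ^ 2 * I ^ 2)
      (y₂ * I ^ 6 - 6 * c * y₁ * I ^ 5 + 6 * c ^ 2 * y₀ * I ^ 4 - 12 * c ^ 3 * I ^ 3)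
      (y₃ * I ^ 8 - 12 * c * y₂ * I ^ 7 + 36 * c ^ 2 * y₁ * I ^ 6 - 24 * c ^ 3 * y₀ * I ^ 5
        + 36 * c ^ 4 * I ^ 4) =
      I ^ 8 * chazyPoly μ y₀ y₁ y₂ y₃ := by
  unfold chazyPoly
  ring

def mobius (a b c d x : ℂ) : ℂ := (a * x + b) / (c * x + d)

def slash (a b c d : ℂ) (n : ℕ) (f : ℂ → ℂ) (x : ℂ) : ℂ :=
  f (mobius a b c d x) * (c * x + d)⁻¹ ^ n

def chazyAction (a b c d : ℂ) (y : ℂ → ℂ) (x : ℂ) : ℂ :=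
  slash a b c d 2 y x - 6 * c * slash a b c d 1 1 x

end

section Mobius

variable {a b c d x : ℂ}

theorem isOpen_mobius_preimage {U : Set ℂ} (hU : IsOpen U) :
    IsOpen ({x | c * x + d ≠ 0} ∩ mobius a b c d ⁻¹' U) := by
  have hcont : ContinuousOn (mobius a b c d) {x | c * x + d ≠ 0} :=
    ContinuousOn.div (by fun_prop) (by fun_prop) fun _ hx => hx
  exact hcont.isOpen_inter_preimage (isOpen_ne_fun (by fun_prop) (by fun_prop)) hU

theorem hasDerivAt_mobius (hdet : a * d - b * c = 1) (hx : c * x + d ≠ 0) :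
    HasDerivAt (mobius a b c d) ((c * x + d)⁻¹ ^ 2) x := by
  have h := (((hasDerivAt_id' x).const_mul a).add_const b).div
    (((hasDerivAt_id' x).const_mul c).add_const d) hx
  refine h.congr_deriv ?_
  field_simp
  linear_combination hdet

theorem hasDerivAt_inv_linear_pow (hx : c * x + d ≠ 0) (n : ℕ) :
    HasDerivAt (fun x => (c * x + d)⁻¹ ^ n) (-(n * c) * (c * x + d)⁻¹ ^ (n + 1)) x := by
  have h := ((((hasDerivAt_id' x).const_mul c).add_const d).inv hx).pow n
  refine h.congr_deriv ?_
  rcases n with _ | n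
  · simp
  · simp only [Nat.add_sub_cancel, Pi.inv_apply, div_eq_mul_inv, ← inv_pow]
    push_cast
    ring

theorem hasDerivAt_slash (hdet : a * d - b * c = 1) (hx : c * x + d ≠ 0) {f f' : ℂ → ℂ}
    (hf : HasDerivAt f (f' (mobius a b c d x)) (mobius a b c d x)) (n : ℕ) :
    HasDerivAt (slash a b c d n f)
      (slash a b c d (n + 2) f' x - n * c * slash a b c d (n + 1) f x) x := by
  refine ((hf.comp x (hasDerivAt_mobius hdet hx)).mul
    (hasDerivAt_inv_linear_pow hx n)).congr_deriv ?_
  simp only [slash, Function.comp_apply]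
  ring

theorem hasDerivAt_slash_one (hdet : a * d - b * c = 1) (hx : c * x + d ≠ 0) (n : ℕ) :
    HasDerivAt (slash a b c d n 1) (-(n * c) * slash a b c d (n + 1) 1 x) x :=
  (hasDerivAt_slash hdet hx (f' := 0) (hasDerivAt_const _ 1) n).congr_deriv (by simp [slash])

theorem chazyOp_chazyAction (μ : ℂ) (hdet : a * d - b * c = 1) {U : Set ℂ} (hU : IsOpen U)
    {y : ℂ → ℂ} (hy : DifferentiableOn ℂ y U) (hx : c * x + d ≠ 0)
    (hxU : mobius a b c d x ∈ U) :
    chazyOp μ (chazyAction a b c d y) x = (c * x + d)⁻¹ ^ 8 * chazyOp μ y (mobius a b c d x) := by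
  set S := {x | c * x + d ≠ 0} ∩ mobius a b c d ⁻¹' U
  have hS : IsOpen S := isOpen_mobius_preimage hU
  have hxS : x ∈ S := ⟨hx, hxU⟩
  have hyA := hy.analyticOnNhd hU
  set Y : ℕ → ℂ → ℂ := fun j => iteratedDeriv j y
  set F : ℕ → (ℂ → ℂ) → ℂ → ℂ := slash a b c d
  have hY (n j : ℕ) {z} (hz : z ∈ S) :
      HasDerivAt (F n (Y j)) (F (n + 2) (Y (j + 1)) z - n * c * F (n + 1) (Y j) z) z :=
    hasDerivAt_slash hdet hz.1 (hyA.hasDerivAt_iteratedDeriv hz.2 j) n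
  have hI (n : ℕ) {z} (hz : z ∈ S) := hasDerivAt_slash_one hdet hz.1 n
  set t₀ := fun z => F 2 (Y 0) z - 6 * c * F 1 1 z
  set t₁ := fun z => F 4 (Y 1) z - 2 * c * F 3 (Y 0) z + 6 * c ^ 2 * F 2 1 z
  set t₂ := fun z => F 6 (Y 2) z - 6 * c * F 5 (Y 1) z + 6 * c ^ 2 * F 4 (Y 0) z
    - 12 * c ^ 3 * F 3 1 z
  set t₃ := fun z => F 8 (Y 3) z - 12 * c * F 7 (Y 2) z + 36 * c ^ 2 * F 6 (Y 1) z
    - 24 * c ^ 3 * F 5 (Y 0) z + 36 * c ^ 4 * F 4 1 z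
  have h₀ : EqOn (iteratedDeriv 0 (chazyAction a b c d y)) t₀ S := fun z _ => by
    simp [t₀, Y, F, chazyAction]
  have h₁ := h₀.iteratedDeriv_succ (g' := t₁) hS fun z hz =>
    ((hY 2 0 hz).sub ((hI 1 hz).const_mul (6 * c))).congr_deriv (by push_cast; ring)
  have h₂ := h₁.iteratedDeriv_succ (g' := t₂) hS fun z hz =>
    (((hY 4 1 hz).sub (((hY 3 0 hz).const_mul (2 * c)))).add
      ((hI 2 hz).const_mul (6 * c ^ 2))).congr_deriv (by push_cast; ring)
  have h₃ := h₂.iteratedDeriv_succ (g' := t₃) hS fun z hz =>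
    ((((hY 6 2 hz).sub ((hY 5 1 hz).const_mul (6 * c))).add
      ((hY 4 0 hz).const_mul (6 * c ^ 2))).sub
      ((hI 3 hz).const_mul (12 * c ^ 3))).congr_deriv (by push_cast; ring)
  unfold chazyOp
  rw [← iteratedDeriv_one, h₁ hxS, h₂ hxS, h₃ hxS, ← chazyPoly_transform μ c]
  simp only [t₁, t₂, t₃, Y, F, slash, chazyAction, Pi.one_apply, iteratedDeriv_zero,
    iteratedDeriv_one]
  ring_nf

end Mobius

theorem chazy_sl2_action_general (k : ℂ)
    (U : Set ℂ) (hU : IsOpen U) (y : ℂ → ℂ) (hy : ContDiffOn ℂ 3 y U)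
    (hsol : ∀ x ∈ U, iteratedDeriv 3 y x - 2 * iteratedDeriv 2 y x * y x
      + 3 * (deriv y x) ^ 2 - (4 / (36 - k ^ 2)) * (6 * deriv y x - (y x) ^ 2) ^ 2 = 0)
    (a b c d : ℂ) (hdet : a * d - b * c = 1)
    (ytil : ℂ → ℂ)
    (hytil : ∀ x : ℂ, ytil x = ((c * x + d) ^ 2)⁻¹ * y ((a * x + b) / (c * x + d))
      - 6 * c / (c * x + d)) :
    ∀ x : ℂ, c * x + d ≠ 0 → (a * x + b) / (c * x + d) ∈ U →
      iteratedDeriv 3 ytil x - 2 * iteratedDeriv 2 ytil x * ytil x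
        + 3 * (deriv ytil x) ^ 2
        - (4 / (36 - k ^ 2)) * (6 * deriv ytil x - (ytil x) ^ 2) ^ 2 = 0 := by
  intro x hx hxU
  have hytil_eq : ytil = chazyAction a b c d y := funext fun z => by
    simp only [hytil, chazyAction, slash, mobius, Pi.one_apply, inv_pow, div_eq_mul_inv]
    ring
  change chazyOp _ ytil x = 0
  rw [hytil_eq, chazyOp_chazyAction _ hdet hU (hy.differentiableOn (by norm_num)) hx hxU]
  exact mul_eq_zero_of_right _ (hsol _ hxU)

/-- The `SL₂(ℂ)` action `ỹ(x) = (cx+d)⁻² y((ax+b)/(cx+d)) - 6c/(cx+d)` takes solutions of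
the generalised Chazy equation with parameter `k ≠ ±6` to solutions. -/
theorem chazy_sl2_action (k : ℂ) (hk : k ≠ 6) (hk' : k ≠ -6)
    (U : Set ℂ) (hU : IsOpen U) (y : ℂ → ℂ) (hy : ContDiffOn ℂ 3 y U)
    (hsol : ∀ x ∈ U, iteratedDeriv 3 y x - 2 * iteratedDeriv 2 y x * y x
      + 3 * (deriv y x) ^ 2 - (4 / (36 - k ^ 2)) * (6 * deriv y x - (y x) ^ 2) ^ 2 = 0)
    (a b c d : ℂ) (hdet : a * d - b * c = 1)
    (ytil : ℂ → ℂ)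
    (hytil : ∀ x : ℂ, ytil x = ((c * x + d) ^ 2)⁻¹ * y ((a * x + b) / (c * x + d))
      - 6 * c / (c * x + d)) :
    ∀ x : ℂ, c * x + d ≠ 0 → (a * x + b) / (c * x + d) ∈ U →
      iteratedDeriv 3 ytil x - 2 * iteratedDeriv 2 ytil x * ytil x
        + 3 * (deriv ytil x) ^ 2
        - (4 / (36 - k ^ 2)) * (6 * deriv ytil x - (ytil x) ^ 2) ^ 2 = 0 :=
  chazy_sl2_action_general k U hU y hy hsol a b c d hdet ytil hytil
end

section
/- If y solves the generalised Chazy equation with k ≠ ±6 and x̃ = (ax+b)/(cx+d) with ad-bc=1, then (cx+d)⁴·(6ỹ'(x) - ỹ(x)²) = 6y'(x̃) - y(x̃)², where ỹ(x) = (cx+d)⁻²y(x̃) - 6c/(cx+d) and the prime on the left is d/dx while the prime on the right is d/dx̃. -/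
/-!
The shift `-6c/(cx+d)` in `ỹ` is exactly what makes the transformation work: writing `w = cx+d`,
`Y = y(x̃)`, `Y' = y'(x̃)` and using `dx̃/dx = w⁻²`, one finds `ỹ = (Y - 6cw)/w²` and
`ỹ' = (Y' - 2cwY + 6c²w²)/w⁴`, so in `6ỹ' - ỹ²` the terms in `cwY` and `c²w²` cancel and
`6ỹ' - ỹ² = (6Y' - Y²)/w⁴`.
-/

variable {𝕜 : Type*} [NontriviallyNormedField 𝕜]

theorem hasDerivAt_moebius {a b c d x : 𝕜} (hx : c * x + d ≠ 0) :
    HasDerivAt (fun z => (a * z + b) / (c * z + d)) ((a * d - b * c) / (c * x + d) ^ 2) x := by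
  have hnum : HasDerivAt (fun z => a * z + b) a x := by
    simpa using ((hasDerivAt_id x).const_mul a).add_const b
  have hden : HasDerivAt (fun z => c * z + d) c x := by
    simpa using ((hasDerivAt_id x).const_mul c).add_const d
  exact (hnum.div hden hx).congr_deriv (by ring)

def chazyTransform (a b c d : 𝕜) (y : 𝕜 → 𝕜) (x : 𝕜) : 𝕜 :=
  ((c * x + d) ^ 2)⁻¹ * y ((a * x + b) / (c * x + d)) - 6 * c / (c * x + d)

theorem chazyTransform_eq {a b c d x : 𝕜} (y : 𝕜 → 𝕜) (hx : c * x + d ≠ 0) :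
    chazyTransform a b c d y x
      = (y ((a * x + b) / (c * x + d)) - 6 * c * (c * x + d)) / (c * x + d) ^ 2 := by
  unfold chazyTransform
  field_simp

theorem hasDerivAt_chazyTransform {a b c d x y' : 𝕜} {y : 𝕜 → 𝕜} (hdet : a * d - b * c = 1)
    (hx : c * x + d ≠ 0) (hy : HasDerivAt y y' ((a * x + b) / (c * x + d))) :
    HasDerivAt (chazyTransform a b c d y)
      ((y' - 2 * c * (c * x + d) * y ((a * x + b) / (c * x + d)) + 6 * c ^ 2 * (c * x + d) ^ 2)
        / (c * x + d) ^ 4) x := by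
  have hden : HasDerivAt (fun z => c * z + d) c x := by
    simpa using ((hasDerivAt_id x).const_mul c).add_const d
  have hcomp := hy.comp x (hasDerivAt_moebius (a := a) (b := b) hx)
  have hinvsq := (hden.fun_pow 2).fun_inv (pow_ne_zero 2 hx)
  have hshift := (hasDerivAt_const x (6 * c)).fun_div hden hx
  refine ((hinvsq.mul hcomp).sub hshift).congr_deriv ?_
  simp only [Function.comp_apply, hdet]
  field_simp
  ring

theorem chazyTransform_weight_four {a b c d x y' : 𝕜} {y : 𝕜 → 𝕜} (hdet : a * d - b * c = 1)
    (hx : c * x + d ≠ 0) (hy : HasDerivAt y y' ((a * x + b) / (c * x + d))) :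
    (c * x + d) ^ 4 * (6 * deriv (chazyTransform a b c d y) x - chazyTransform a b c d y x ^ 2)
      = 6 * y' - y ((a * x + b) / (c * x + d)) ^ 2 := by
  rw [(hasDerivAt_chazyTransform hdet hx hy).deriv, chazyTransform_eq y hx]
  field_simp
  ring

theorem chazy_weight4_transform_general
    (U : Set ℂ) (hU : IsOpen U) (y : ℂ → ℂ) (hy : ContDiffOn ℂ 3 y U)
    (a b c d : ℂ) (hdet : a * d - b * c = 1)
    (ytil : ℂ → ℂ)
    (hytil : ∀ x : ℂ, ytil x = ((c * x + d) ^ 2)⁻¹ * y ((a * x + b) / (c * x + d))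
      - 6 * c / (c * x + d)) :
    ∀ x : ℂ, c * x + d ≠ 0 → (a * x + b) / (c * x + d) ∈ U →
      (c * x + d) ^ 4 * (6 * deriv ytil x - (ytil x) ^ 2)
        = 6 * deriv y ((a * x + b) / (c * x + d))
          - (y ((a * x + b) / (c * x + d))) ^ 2 := by
  intro x hx hmem
  obtain rfl : ytil = chazyTransform a b c d y := funext hytil
  have hyd : DifferentiableAt ℂ y ((a * x + b) / (c * x + d)) :=
    (hy.differentiableOn (by norm_num)).differentiableAt (hU.mem_nhds hmem)
  exact chazyTransform_weight_four hdet hx hyd.hasDerivAt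

/-- Under the Möbius change of variable `x̃ = (ax+b)/(cx+d)` with `ad-bc = 1`, the quantity
`6y' - y²` transforms with weight 4:
`(cx+d)⁴(6ỹ'(x) - ỹ(x)²) = 6y'(x̃) - y(x̃)²`. -/
theorem chazy_weight4_transform (k : ℂ) (hk : k ≠ 6) (hk' : k ≠ -6)
    (U : Set ℂ) (hU : IsOpen U) (y : ℂ → ℂ) (hy : ContDiffOn ℂ 3 y U)
    (hsol : ∀ x ∈ U, iteratedDeriv 3 y x - 2 * iteratedDeriv 2 y x * y x
      + 3 * (deriv y x) ^ 2 - (4 / (36 - k ^ 2)) * (6 * deriv y x - (y x) ^ 2) ^ 2 = 0)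
    (a b c d : ℂ) (hdet : a * d - b * c = 1)
    (ytil : ℂ → ℂ)
    (hytil : ∀ x : ℂ, ytil x = ((c * x + d) ^ 2)⁻¹ * y ((a * x + b) / (c * x + d))
      - 6 * c / (c * x + d)) :
    ∀ x : ℂ, c * x + d ≠ 0 → (a * x + b) / (c * x + d) ∈ U →
      (c * x + d) ^ 4 * (6 * deriv ytil x - (ytil x) ^ 2)
        = 6 * deriv y ((a * x + b) / (c * x + d))
          - (y ((a * x + b) / (c * x + d))) ^ 2 :=
  chazy_weight4_transform_general U hU y hy a b c d hdet ytil hytil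
end

section
/- The function y(x) = -10/(3x) solves the generalised Chazy equation with parameter k = 2/3, i.e. y''' - 2y''y + 3(y')² - (9/80)(6y'-y²)² = 0 for x ≠ 0; more generally, for any distinct constants B, C, the function y(x) = -8/(3(x+C)) - 10/(3(x+B)) solves the same equation for x ∉ {-B, -C}. -/
/-!
The `k`-th derivative of `a / (x + b)` is `(-1)^k k! a u^(k+1)` with `u = 1 / (x + b)`, so on the
ansatz `y = a / (x + b) + c / (x + d)` the Chazy expression becomes a polynomial in `u` and
`v = 1 / (x + d)`. For the residues `(a, c) = (-10/3, 0)` and `(-8/3, -10/3)` this polynomial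
vanishes identically, without any relation between `u` and `v`.
-/

open Nat

theorem iteratedDeriv_inv_add_const {𝕜 : Type*} [NontriviallyNormedField 𝕜] (k : ℕ) (b x : 𝕜) :
    iteratedDeriv k (fun z => (z + b)⁻¹) x = (-1) ^ k * k ! * (x + b)⁻¹ ^ (k + 1) := by
  have h := congr_fun (iter_deriv_inv_linear k (1 : 𝕜) b) x
  simp only [one_mul, one_pow, mul_one] at h
  rw [iteratedDeriv_eq_iterate, h, show (-1 - k : ℤ) = -((k + 1 : ℕ) : ℤ) by push_cast; ring,
    zpow_neg, zpow_natCast, inv_pow]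

theorem iteratedDeriv_two_poles {𝕜 : Type*} [NontriviallyNormedField 𝕜] (k : ℕ) {b d x : 𝕜}
    (a c : 𝕜) (hb : x + b ≠ 0) (hd : x + d ≠ 0) :
    iteratedDeriv k (fun z => a * (z + b)⁻¹ + c * (z + d)⁻¹) x =
      (-1) ^ k * k ! * (a * (x + b)⁻¹ ^ (k + 1) + c * (x + d)⁻¹ ^ (k + 1)) := by
  rw [iteratedDeriv_fun_add (by fun_prop (disch := assumption))
      (by fun_prop (disch := assumption)),
    iteratedDeriv_const_mul_field, iteratedDeriv_const_mul_field,
    iteratedDeriv_inv_add_const, iteratedDeriv_inv_add_const]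
  ring

noncomputable def chazyK23 (y : ℂ → ℂ) (x : ℂ) : ℂ :=
  iteratedDeriv 3 y x - 2 * iteratedDeriv 2 y x * y x + 3 * (deriv y x) ^ 2
    - (9 / 80) * (6 * deriv y x - (y x) ^ 2) ^ 2

theorem chazyK23_two_poles {b d x : ℂ} (a c : ℂ) (hb : x + b ≠ 0) (hd : x + d ≠ 0) :
    chazyK23 (fun z => a * (z + b)⁻¹ + c * (z + d)⁻¹) x =
      -6 * (a * (x + b)⁻¹ ^ 4 + c * (x + d)⁻¹ ^ 4)
        - 4 * (a * (x + b)⁻¹ ^ 3 + c * (x + d)⁻¹ ^ 3) * (a * (x + b)⁻¹ + c * (x + d)⁻¹)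
        + 3 * (a * (x + b)⁻¹ ^ 2 + c * (x + d)⁻¹ ^ 2) ^ 2
        - (9 / 80) * (-6 * (a * (x + b)⁻¹ ^ 2 + c * (x + d)⁻¹ ^ 2)
          - (a * (x + b)⁻¹ + c * (x + d)⁻¹) ^ 2) ^ 2 := by
  simp only [chazyK23, ← iteratedDeriv_one, iteratedDeriv_two_poles _ a c hb hd, Nat.factorial]
  push_cast
  ring

/-- `y(x) = -10/(3x)` solves the generalised Chazy equation with `k = 2/3`, and more
generally, for distinct constants `B, C`, so does
`y(x) = -8/(3(x+C)) - 10/(3(x+B))`. -/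
theorem chazy_k23_sol2 :
    (∀ y : ℂ → ℂ, (∀ x : ℂ, y x = -10 / (3 * x)) →
      ∀ x : ℂ, x ≠ 0 →
        iteratedDeriv 3 y x - 2 * iteratedDeriv 2 y x * y x + 3 * (deriv y x) ^ 2
          - (9 / 80) * (6 * deriv y x - (y x) ^ 2) ^ 2 = 0) ∧
    (∀ B C : ℂ, B ≠ C → ∀ y : ℂ → ℂ,
      (∀ x : ℂ, y x = -8 / (3 * (x + C)) - 10 / (3 * (x + B))) →
      ∀ x : ℂ, x ≠ -B → x ≠ -C →
        iteratedDeriv 3 y x - 2 * iteratedDeriv 2 y x * y x + 3 * (deriv y x) ^ 2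
          - (9 / 80) * (6 * deriv y x - (y x) ^ 2) ^ 2 = 0) := by
  refine ⟨fun y hy x hx => ?_, fun B C _ y hy x hxB hxC => ?_⟩
  · obtain rfl : y = fun z => -10 / 3 * (z + 0)⁻¹ + 0 * (z + 0)⁻¹ := by
      funext z; rw [hy, add_zero, ← div_div]; ring
    have hx0 : x + 0 ≠ 0 := by rwa [add_zero]
    change chazyK23 _ x = 0
    rw [chazyK23_two_poles _ _ hx0 hx0]
    ring
  · obtain rfl : y = fun z => -8 / 3 * (z + C)⁻¹ + -10 / 3 * (z + B)⁻¹ := by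
      funext z; rw [hy, ← div_div, ← div_div]; ring
    change chazyK23 _ x = 0
    rw [chazyK23_two_poles _ _ (fun h => hxC (eq_neg_of_add_eq_zero_left h))
      (fun h => hxB (eq_neg_of_add_eq_zero_left h))]
    ring
end

section
/- Let k ≠ ±6 and m = 4/(36-k²), ℓ ≠ 0, and consider the 4th-order equation E(ℓ,m): f³f'''' - 2(ℓ+2)f²f'f''' + 3(-12ℓm+ℓ-1)f²(f'')² + 12(ℓ²m+6ℓm+1)f(f')²f'' - (ℓ³m+12ℓ²m+36ℓm+ℓ+6)(f')⁴ = 0. Under the substitution f = 1/h, d/dx = (1/h)d/dt, the equation E(ℓ,m) transforms into h³h'''' + (2ℓ-11)h²h'h''' + (36ℓm-3ℓ-7)h²(h'')² + (12ℓ²m-144ℓm-2ℓ+59)h(h')²h'' + (ℓ³m-24ℓ²m+144ℓm+4ℓ-48)(h')⁴ = 0. If the transformed equation is again of the form E(j,n) for some j ≠ 0 and n, then necessarily n ∈ {16/135, 9/80}, i.e. the dual Chazy parameter satisfies k = ±2/3 or k = ±3/2. -/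
/-!
The first matching condition is linear in `ℓ`, and once `ℓ` is eliminated the second one
determines `ℓ m` in terms of `j n`. Substituting into the third and fourth conditions leaves
two equations in `j` and `j n` alone, each linear in `j n`; their compatibility forces
`(2j - 3)(j - 2) = 0`, and `j n = (34 j + 13)/360` then gives `n`.
-/

namespace ChazyDuality

variable {R : Type*} [CommRing R] {l m j n : R}

theorem two_mul_l_eq (h1 : 2 * l - 11 = -2 * (j + 2)) : 2 * l = 7 - 2 * j := by
  linear_combination h1

theorem l_mul_m_eq (h1 : 2 * l - 11 = -2 * (j + 2))
    (h2 : 36 * l * m - 3 * l - 7 = 3 * (-12 * j * n + j - 1)) :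
    72 * l * m = 29 - 72 * j * n := by
  linear_combination 2 * h2 + 3 * two_mul_l_eq h1

theorem j_mul_n_eq (h1 : 2 * l - 11 = -2 * (j + 2))
    (h2 : 36 * l * m - 3 * l - 7 = 3 * (-12 * j * n + j - 1))
    (h3 : 12 * l ^ 2 * m - 144 * l * m - 2 * l + 59 = 12 * (j ^ 2 * n + 6 * j * n + 1)) :
    360 * j * n = 34 * j + 13 := by
  linear_combination 12 * h3 - (2 * l - 24) * l_mul_m_eq h1 h2
    - (17 - 72 * j * n) * two_mul_l_eq h1

theorem quartic_coeff_eq (h1 : 2 * l - 11 = -2 * (j + 2))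
    (h2 : 36 * l * m - 3 * l - 7 = 3 * (-12 * j * n + j - 1))
    (h4 : l ^ 3 * m - 24 * l ^ 2 * m + 144 * l * m + 4 * l - 48
      = -(j ^ 3 * n + 12 * j ^ 2 * n + 36 * j * n + j + 6)) :
    1440 * j ^ 2 * n + 10440 * j * n = 116 * j ^ 2 + 1108 * j + 317 := by
  linear_combination -288 * h4 + (4 * l ^ 2 - 96 * l + 576) * l_mul_m_eq h1 h2
    + ((2 * l + 7 - 2 * j) * (29 - 72 * j * n) - 48 * (29 - 72 * j * n) + 576) * two_mul_l_eq h1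

theorem j_eq_three_halves_or_two {K : Type*} [Field K] [CharZero K] {j n : K}
    (hjn : 360 * j * n = 34 * j + 13)
    (hquart : 1440 * j ^ 2 * n + 10440 * j * n = 116 * j ^ 2 + 1108 * j + 317) :
    j = 3 / 2 ∨ j = 2 := by
  have hq : (2 * j - 3) * (j - 2) = 0 := by
    linear_combination (1 / 10) * hquart - ((4 * j + 29) / 10) * hjn
  rcases mul_eq_zero.mp hq with h | h
  · exact Or.inl (by linear_combination h / 2)
  · exact Or.inr (by linear_combination h)

end ChazyDuality

open ChazyDuality in
theorem chazy_duality_uniqueness_general (l m j n : ℂ)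
    (h1 : 2 * l - 11 = -2 * (j + 2))
    (h2 : 36 * l * m - 3 * l - 7 = 3 * (-12 * j * n + j - 1))
    (h3 : 12 * l ^ 2 * m - 144 * l * m - 2 * l + 59 = 12 * (j ^ 2 * n + 6 * j * n + 1))
    (h4 : l ^ 3 * m - 24 * l ^ 2 * m + 144 * l * m + 4 * l - 48
      = -(j ^ 3 * n + 12 * j ^ 2 * n + 36 * j * n + j + 6)) :
    n = 16 / 135 ∨ n = 9 / 80 := by
  have hjn := j_mul_n_eq h1 h2 h3
  rcases j_eq_three_halves_or_two hjn (quartic_coeff_eq h1 h2 h4) with rfl | rfl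
  · left
    linear_combination hjn / 540
  · right
    linear_combination hjn / 720

/-- Uniqueness of the Legendre duality for the generalised Chazy equation: if the equation
obtained from `E(ℓ,m)` by the substitution `f = 1/h`, `d/dx = (1/h) d/dt` is again of the
form `E(j,n)` (matching coefficients), then `n = 16/135` or `n = 9/80`, i.e. the dual Chazy
parameter is `k = ±2/3` or `k = ±3/2`. -/
theorem chazy_duality_uniqueness (l m j n : ℂ) (hl : l ≠ 0) (hj : j ≠ 0)
    (h1 : 2 * l - 11 = -2 * (j + 2))
    (h2 : 36 * l * m - 3 * l - 7 = 3 * (-12 * j * n + j - 1))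
    (h3 : 12 * l ^ 2 * m - 144 * l * m - 2 * l + 59 = 12 * (j ^ 2 * n + 6 * j * n + 1))
    (h4 : l ^ 3 * m - 24 * l ^ 2 * m + 144 * l * m + 4 * l - 48
      = -(j ^ 3 * n + 12 * j ^ 2 * n + 36 * j * n + j + 6)) :
    n = 16 / 135 ∨ n = 9 / 80 :=
  chazy_duality_uniqueness_general l m j n h1 h2 h3 h4
end
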